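/- Let I ⊆ C be a finite subset with card(I) = N ≥ 1 and fix an element i_0 ∈ I. Then the (N−1)! rational functions E_{vI}(t_I), where vI ranges over the sequences in Seq(I) whose first element is i_0, are linearly independent over ℂ, and every function E_{vJ}(t_I), vJ ∈ Seq(I), is a ℂ-linear combination of them. -/

import Mathlib

/- STATEMENT 9.
Fix a finite index set `C` and a finite subset `I ⊆ C` with `card(I) = N ≥ 1`, realized as the
set of entries of a nonempty nodup list `vL`; `Seq(I)` is the set of permutations of `vL`, and
`i₀ ∈ I`.  The theorem: the `(N−1)!` functions `E_{vI}(t_I)` with `vI ∈ Seq(I)` starting at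
`i₀` are linearly independent over ℂ, and every `E_{vJ}(t_I)`, `vJ ∈ Seq(I)`, lies in their
ℂ-span. -/

noncomputable section

abbrev FF (C : Type) := FractionRing (MvPolynomial C ℂ)

def tv {C : Type} (i : C) : FF C := algebraMap (MvPolynomial C ℂ) (FF C) (MvPolynomial.X i)

/-- Auxiliary product: `Eaux w [i₁,…,i_N] = 1/(t_{i₁} − w) · ∏_{j=2}^N 1/(t_{i_j} − t_{i_{j−1}})`. -/
def Eaux {C : Type} (w : FF C) : List C → FF C
  | [] => 1
  | i :: tl => (tv i - w)⁻¹ * Eaux (tv i) tl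

/-- `E_{vI}(t_I) = ∏_{j=2}^N 1/(t_{i_j} − t_{i_{j−1}})` for `vI = (i₁,…,i_N)`. -/
def Eplain {C : Type} : List C → FF C
  | [] => 1
  | i :: tl => Eaux (tv i) tl

end

/-
Linear independence: grouping the sequences `(i₀, j, u)` by their second entry `j` writes a
relation as `∑ⱼ Fⱼ / (t_j − t_{i₀}) = 0`, where `Fⱼ` is a combination of the `E_{(j, u)}`, none
of which involves `t_{i₀}`. As `t_{i₀}` is transcendental over the field generated by the other
variables, such a partial fraction decomposition in `t_{i₀}` is unique, so every `Fⱼ` vanishes,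
and induction on `N` applies to each `Fⱼ`.

Spanning: if `j` sits between `x` and `y` in a sequence, the identity
`1/((t_j − t_x)(t_y − t_j)) = (1/(t_j − t_x) − 1/(t_j − t_y)) · 1/(t_y − t_x)` removes `j` at
the cost of factors `1/(t_j − t_k)`, `k ∈ {x, y}`; by induction the shorter sequence lies in the
span of the sequences starting at `k`, and `E_{(j, k, …)} = −E_{(k, …)} / (t_j − t_k)`.
-/

open Polynomial in
theorem Transcendental.eq_zero_of_sum_mul_inv_sub_eq_zero {F L ι : Type*} [Field F] [Field L]
    [Algebra F L] {K : IntermediateField F L} {x : L} (hx : Transcendental K x)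
    [DecidableEq ι] {s : Finset ι} {a f : ι → L} (ha : ∀ i ∈ s, a i ∈ K)
    (hf : ∀ i ∈ s, f i ∈ K) (hinj : Set.InjOn a s)
    (hsum : ∑ i ∈ s, f i * (a i - x)⁻¹ = 0) : ∀ i ∈ s, f i = 0 := by
  have hK : ∀ y ∈ K, C y ∈ liftsRing (algebraMap K L) := fun y hy =>
    ⟨C ⟨y, hy⟩, by simp⟩
  have hne : ∀ i ∈ s, a i - x ≠ 0 := fun i hi h =>
    hx (sub_eq_zero.mp h ▸ isAlgebraic_algebraMap (⟨a i, ha i hi⟩ : K))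
  set P : L[X] := ∑ i ∈ s, C (f i) * ∏ k ∈ s.erase i, (C (a k) - X)
  have hPx : P.eval x = 0 := calc
    P.eval x = (∑ i ∈ s, f i * (a i - x)⁻¹) * ∏ k ∈ s, (a k - x) := by
      simp only [P, eval_finsetSum, eval_mul, eval_prod, eval_sub, eval_C, eval_X,
        Finset.sum_mul]
      refine Finset.sum_congr rfl fun i hi => ?_
      rw [← Finset.mul_prod_erase s _ hi, mul_assoc, inv_mul_cancel_left₀ (hne i hi)]
    _ = 0 := by rw [hsum, zero_mul]
  obtain ⟨q, hq⟩ : P ∈ liftsRing (algebraMap K L) :=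
    sum_mem fun i hi => mul_mem (hK _ (hf i hi))
      (prod_mem fun k hk => sub_mem (hK _ (ha k (Finset.mem_of_mem_erase hk))) ⟨X, map_X _⟩)
  have hP : P = 0 := by
    have hq0 : q = 0 := transcendental_iff.mp hx q <| by
      rw [aeval_def, eval₂_eq_eval_map, ← coe_mapRingHom, hq, hPx]
    rw [← hq, hq0, map_zero]
  intro i hi
  have hPa : P.eval (a i) = f i * ∏ k ∈ s.erase i, (a k - a i) := by
    simp only [P, eval_finsetSum, eval_mul, eval_prod, eval_sub, eval_C, eval_X]
    refine Finset.sum_eq_single i (fun k hk hki => ?_) (absurd hi)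
    rw [Finset.prod_eq_zero (Finset.mem_erase.mpr ⟨Ne.symm hki, hi⟩) (sub_self _), mul_zero]
  have hprod : ∏ k ∈ s.erase i, (a k - a i) ≠ 0 := Finset.prod_ne_zero_iff.mpr fun k hk =>
    sub_ne_zero.mpr fun h => Finset.ne_of_mem_erase hk (hinj (Finset.mem_of_mem_erase hk) hi h)
  simpa [hP, hprod] using hPa.symm

theorem List.sum_permutations_toFinset {α β : Type*} [DecidableEq α] [AddCommMonoid β]
    {l : List α} (hl : l ≠ []) (F : List α → β) :
    ∑ w ∈ l.permutations.toFinset, F w =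
      ∑ a ∈ l.toFinset, ∑ u ∈ (l.erase a).permutations.toFinset, F (a :: u) := by
  have hsplit : l.permutations.toFinset =
      l.toFinset.biUnion fun a => (l.erase a).permutations.toFinset.image (a :: ·) := by
    ext (_ | ⟨a, u⟩)
    · simpa using hl ∘ List.nil_perm.mp
    · simp [List.cons_perm_iff_perm_erase]
  rw [hsplit, Finset.sum_biUnion]
  · exact Finset.sum_congr rfl fun a _ => Finset.sum_image fun _ _ _ _ h => List.cons_injective h
  · intro a _ b _ hab
    simp only [Function.onFun, Finset.disjoint_left, Finset.mem_image]
    rintro _ ⟨u, -, rfl⟩ ⟨v, -, h⟩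
    exact hab (List.cons.inj h).1.symm

theorem List.setOf_mem_permutations_head_eq {α : Type*} [DecidableEq α] {l : List α} {a : α}
    (ha : a ∈ l) :
    {w | w ∈ l.permutations.toFinset ∧ w.head? = some a} =
      (a :: ·) '' ((l.erase a).permutations.toFinset : Set (List α)) := by
  ext (_ | ⟨b, u⟩)
  · simp
  · simp only [Set.mem_ofPred_eq, Set.mem_image, Finset.mem_coe, List.mem_toFinset,
      List.mem_permutations, List.head?_cons, Option.some.injEq, List.cons.injEq]
    constructor
    · rintro ⟨hperm, rfl⟩
      exact ⟨u, (List.cons_perm_iff_perm_erase.mp hperm).2, rfl, rfl⟩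
    · rintro ⟨v, hv, rfl, rfl⟩
      exact ⟨List.cons_perm_iff_perm_erase.mpr ⟨ha, hv⟩, rfl⟩

variable {C : Type}

theorem algebraicIndependent_tv : AlgebraicIndependent ℂ (tv : C → FF C) :=
  (MvPolynomial.algebraicIndependent_X C ℂ).map'
    (f := IsScalarTower.toAlgHom ℂ (MvPolynomial C ℂ) (FF C)) (IsFractionRing.injective _ _)

theorem tv_injective : Function.Injective (tv : C → FF C) :=
  algebraicIndependent_tv.injective

open IntermediateField.algebraAdjoinAdjoin in
theorem transcendental_tv (i : C) :
    Transcendental (IntermediateField.adjoin ℂ (tv '' {i}ᶜ)) (tv i) :=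
  (algebraicIndependent_tv.transcendental_adjoin (s := {i}ᶜ) (by simp)).extendScalars _

theorem Eaux_mem {F : Type*} [Field F] [Algebra F (FF C)] {K : IntermediateField F (FF C)}
    {w : FF C} {u : List C} (hw : w ∈ K) (hu : ∀ i ∈ u, tv i ∈ K) : Eaux w u ∈ K := by
  induction u generalizing w with
  | nil => exact one_mem K
  | cons i u ih =>
    simp only [List.forall_mem_cons] at hu
    exact mul_mem (inv_mem (sub_mem hu.1 hw)) (ih hu.1 hu.2)

theorem Eaux_append_cons (w : FF C) (p : List C) (x : C) (m : List C) :
    Eaux w (p ++ x :: m) = Eaux w (p ++ [x]) * Eaux (tv x) m := by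
  induction p generalizing w with
  | nil => simp [Eaux]
  | cons a p ih => simp only [List.cons_append, Eaux, ih, mul_assoc]

theorem Eplain_append_cons (l : List C) (x : C) (m : List C) :
    Eplain (l ++ x :: m) = Eplain (l ++ [x]) * Eaux (tv x) m := by
  cases l with
  | nil => simp [Eplain, Eaux]
  | cons a p => exact Eaux_append_cons (tv a) p x m

theorem Eaux_cons_cons {x j y : C} (hjx : j ≠ x) (hyj : y ≠ j) (hyx : y ≠ x) (q : List C) :
    Eaux (tv x) (j :: y :: q) =
      ((tv j - tv x)⁻¹ - (tv j - tv y)⁻¹) * Eaux (tv x) (y :: q) := by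
  have h₁ : tv j - tv x ≠ 0 := sub_ne_zero.mpr (tv_injective.ne hjx)
  have h₂ : tv j - tv y ≠ 0 := sub_ne_zero.mpr (tv_injective.ne hyj.symm)
  have h₃ : tv y - tv x ≠ 0 := sub_ne_zero.mpr (tv_injective.ne hyx)
  have h₄ : tv y - tv j ≠ 0 := sub_ne_zero.mpr (tv_injective.ne hyj)
  simp only [Eaux, ← mul_assoc]
  congr 1
  field_simp
  ring

section

variable [DecidableEq C]

theorem linearIndepOn_Eaux_permutations {M : List C} (hM : M.Nodup) {i0 : C} (hi0 : i0 ∉ M) :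
    LinearIndepOn ℂ (Eaux (tv i0)) (M.permutations.toFinset : Set (List C)) := by
  rcases eq_or_ne M [] with rfl | hne
  · simp [linearIndepOn_singleton_iff, Eaux]
  rw [linearIndepOn_finset_iff]
  intro g hg
  have hblock : ∀ j ∈ M.toFinset,
      ∑ u ∈ (M.erase j).permutations.toFinset, g (j :: u) • Eaux (tv j) u = 0 := by
    have hi0' : ∀ j ∈ M.toFinset, j ≠ i0 := fun j hj h => hi0 (h ▸ List.mem_toFinset.mp hj)
    refine (transcendental_tv i0).eq_zero_of_sum_mul_inv_sub_eq_zero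
      (fun j hj => IntermediateField.subset_adjoin _ _ ⟨j, hi0' j hj, rfl⟩)
      (fun j hj => sum_mem fun u hu => ?_) tv_injective.injOn ?_
    · have hu : ∀ i ∈ u, i ∈ M := fun i hi =>
        List.mem_of_mem_erase ((List.perm_of_mem_permutations (List.mem_toFinset.mp hu)).subset hi)
      refine IntermediateField.smul_mem _ (Eaux_mem ?_ fun i hi => ?_)
      · exact IntermediateField.subset_adjoin _ _ ⟨j, hi0' j hj, rfl⟩
      · exact IntermediateField.subset_adjoin _ _ ⟨i, fun h => hi0 (h ▸ hu i hi), rfl⟩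
    · rw [List.sum_permutations_toFinset hne] at hg
      simpa only [Eaux, Finset.sum_mul, smul_mul_assoc, mul_comm (Eaux _ _)] using hg
  intro w hw
  simp only [List.mem_toFinset, List.mem_permutations] at hw
  obtain _ | ⟨j, u⟩ := w
  · exact absurd (List.nil_perm.mp hw) hne
  obtain ⟨hj, hu⟩ := List.cons_perm_iff_perm_erase.mp hw
  exact linearIndepOn_finset_iff.mp (linearIndepOn_Eaux_permutations (hM.erase j)
    hM.not_mem_erase) (fun u => g (j :: u)) (hblock j (List.mem_toFinset.mpr hj)) u
    (by simpa using hu)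
termination_by M.length
decreasing_by have := List.length_erase_add_one hj; omega

theorem inv_sub_mul_mem_span_cons {M : List C} {j k : C} (hj : j ∈ M) {z : FF C}
    (hz : z ∈ Submodule.span ℂ (Eplain '' {v | v.Perm (M.erase j) ∧ v.head? = some k})) :
    (tv j - tv k)⁻¹ * z ∈
      Submodule.span ℂ (Eplain '' {v | v.Perm M ∧ v.head? = some j}) := by
  refine (Submodule.span_le (p := (Submodule.span ℂ _).comap (LinearMap.mulLeft ℂ _))).mpr ?_ hz
  rintro _ ⟨_ | ⟨k', v⟩, ⟨hv, hk⟩, rfl⟩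
  · simp at hk
  obtain rfl : k' = k := by simpa using hk
  have hcons : Eplain (j :: k' :: v) = (tv k' - tv j)⁻¹ * Eplain (k' :: v) := rfl
  have hmul : (tv j - tv k')⁻¹ * Eplain (k' :: v) = (-1 : ℂ) • Eplain (j :: k' :: v) := by
    rw [hcons, neg_one_smul, ← neg_mul, ← inv_neg, neg_sub]
  rw [SetLike.mem_coe, Submodule.mem_comap, LinearMap.mulLeft_apply, hmul]
  exact Submodule.smul_mem _ _ (Submodule.subset_span
    ⟨_, ⟨List.cons_perm_iff_perm_erase.mpr ⟨hj, hv⟩, rfl⟩, rfl⟩)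

theorem Eplain_mem_span_head {M : List C} (hM : M.Nodup) {j : C} (hj : j ∈ M) {w : List C}
    (hw : w.Perm M) :
    Eplain w ∈ Submodule.span ℂ (Eplain '' {v | v.Perm M ∧ v.head? = some j}) := by
  by_cases hhead : w.head? = some j
  · exact Submodule.subset_span ⟨w, ⟨hw, hhead⟩, rfl⟩
  obtain ⟨s, q, rfl⟩ := List.append_of_mem (hw.mem_iff.mpr hj)
  have hw' : (s ++ q).Perm (M.erase j) :=
    (List.cons_perm_iff_perm_erase.mp (List.perm_middle.symm.trans hw)).2
  have key : ∀ k ∈ s ++ q, (tv j - tv k)⁻¹ * Eplain (s ++ q) ∈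
      Submodule.span ℂ (Eplain '' {v | v.Perm M ∧ v.head? = some j}) := fun k hk =>
    inv_sub_mul_mem_span_cons hj (Eplain_mem_span_head (hM.erase j) (hw'.subset hk) hw')
  have hnd := hw.nodup_iff.mpr hM
  obtain ⟨l, x, rfl⟩ : ∃ l x, s = l ++ [x] :=
    ⟨_, _, (List.dropLast_append_getLast fun h => hhead (by simp [h])).symm⟩
  simp only [List.append_assoc, List.singleton_append] at hnd key ⊢
  rw [Eplain_append_cons]
  cases q with
  | nil =>
    convert key x (by simp) using 1
    simp only [Eaux, mul_one, mul_comm]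
  | cons y q =>
    have hxjy : [x, j, y].Nodup := List.Sublist.nodup (by simp) hnd
    obtain ⟨⟨hxj, hxy⟩, hjy⟩ : (x ≠ j ∧ x ≠ y) ∧ j ≠ y := by simpa using hxjy
    rw [Eaux_cons_cons hxj.symm hjy.symm hxy.symm, mul_left_comm, ← Eplain_append_cons, sub_mul]
    exact sub_mem (key x (by simp)) (key y (by simp))
termination_by M.length
decreasing_by have := List.length_erase_add_one hj; omega

end

theorem statement9_general {C : Type} [DecidableEq C]
    (vL : List C) (hnd : vL.Nodup)
    (i0 : C) (hi0 : i0 ∈ vL.toFinset) :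
    LinearIndependent ℂ
      (fun vI : {l : List C // l ∈ vL.permutations.toFinset ∧ l.head? = some i0} =>
        Eplain vI.val) ∧
    ∀ vJ ∈ vL.permutations.toFinset,
      Eplain vJ ∈ Submodule.span ℂ
        (Set.range (fun vI : {l : List C // l ∈ vL.permutations.toFinset ∧
            l.head? = some i0} => Eplain vI.val)) := by
  rw [List.mem_toFinset] at hi0
  constructor
  · show LinearIndepOn ℂ Eplain {l | l ∈ vL.permutations.toFinset ∧ l.head? = some i0}
    rw [List.setOf_mem_permutations_head_eq hi0]
    exact .image_of_comp _ _ (linearIndepOn_Eaux_permutations (hnd.erase i0) hnd.not_mem_erase)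
  · intro vJ hvJ
    refine Submodule.span_mono ?_ (Eplain_mem_span_head hnd hi0 (by simpa using hvJ))
    rintro _ ⟨v, hv, rfl⟩
    exact ⟨⟨v, by simpa using hv⟩, rfl⟩

theorem statement9 {C : Type} [Fintype C] [DecidableEq C]
    (vL : List C) (hnd : vL.Nodup) (hne : vL ≠ [])
    (i0 : C) (hi0 : i0 ∈ vL.toFinset) :
    LinearIndependent ℂ
      (fun vI : {l : List C // l ∈ vL.permutations.toFinset ∧ l.head? = some i0} =>
        Eplain vI.val) ∧
    ∀ vJ ∈ vL.permutations.toFinset,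
      Eplain vJ ∈ Submodule.span ℂ
        (Set.range (fun vI : {l : List C // l ∈ vL.permutations.toFinset ∧
            l.head? = some i0} => Eplain vI.val)) :=
  statement9_general vL hnd i0 hi0
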